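/- For every real number x in the closed interval [y'_0, y''_0] there exists a D-digit sequence (ε_n) with ε_n ∈ {0,1,…,d_n−1} such that x = Σ_{n=1}^∞ σ_n ε_n / (d_1 d_2 ⋯ d_n), i.e. x = T(ε). -/

import Mathlib

open scoped Classical BigOperators

/-- Sign of the `n`-th term: `-1` if `n ∈ N_B`, `+1` otherwise. -/
noncomputable def sigma (B : Set ℕ+) (n : ℕ+) : ℝ := if n ∈ B then -1 else 1

/-- The partial product `d_1 d_2 ⋯ d_n`. -/
noncomputable def dprod (d : ℕ+ → ℕ) (n : ℕ+) : ℝ := ∏ i ∈ Finset.Icc 1 n, (d i : ℝ)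

/-- The quasi-nega-D value of a D-digit sequence `ε`:
`T(ε) = Σ_{n≥1} σ_n ε_n / (d_1 d_2 ⋯ d_n)`. -/
noncomputable def qndVal (d : ℕ+ → ℕ) (B : Set ℕ+) (ε : ℕ+ → ℕ) : ℝ :=
  ∑' n : ℕ+, sigma B n * (ε n : ℝ) / dprod d n

open Finset Filter Topology

/-! The classical greedy algorithm expands any `y ∈ [0, 1]` as a Cantor series
`y = Σ η_n / (d_1 ⋯ d_n)` with digits `η_n ∈ {0, …, d_n - 1}`. Given `x ∈ [y'_0, y''_0]`, expand
`y = x - y'_0`, which lies in `[0, 1]` because `y''_0 - y'_0 = Σ (d_n - 1) / (d_1 ⋯ d_n) = 1`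
telescopes. Replacing `η_n` by `d_n - 1 - η_n` for `n ∈ N_B` shifts the value by exactly `y'_0`. -/

-- The cap at `b - 1` only bites when `r = 1`, which then expands with all digits maximal.
noncomputable def greedyDigit (b : ℕ) (r : ℝ) : ℕ := min ⌊b * r⌋₊ (b - 1)

lemma greedyDigit_lt {b : ℕ} (hb : 0 < b) (r : ℝ) : greedyDigit b r < b :=
  (min_le_right _ _).trans_lt (Nat.sub_lt hb one_pos)

lemma mul_sub_greedyDigit_mem_Icc (b : ℕ) {r : ℝ} (hr : r ∈ Set.Icc (0 : ℝ) 1) :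
    b * r - greedyDigit b r ∈ Set.Icc (0 : ℝ) 1 := by
  obtain ⟨hr0, hr1⟩ := hr
  have hbr : 0 ≤ (b : ℝ) * r := by positivity
  rcases le_total ⌊(b : ℝ) * r⌋₊ (b - 1) with h | h
  · rw [greedyDigit, min_eq_left h]
    exact ⟨sub_nonneg.2 (Nat.floor_le hbr), by linarith [Nat.lt_floor_add_one ((b : ℝ) * r)]⟩
  · rw [greedyDigit, min_eq_right h]
    have hfloor : ((b - 1 : ℕ) : ℝ) ≤ b * r := (Nat.cast_le.2 h).trans (Nat.floor_le hbr)
    have hb : (b : ℝ) ≤ (b - 1 : ℕ) + 1 := by norm_cast; omega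
    have hbr_le : (b : ℝ) * r ≤ b := mul_le_of_le_one_right b.cast_nonneg hr1
    exact ⟨sub_nonneg.2 hfloor, by linarith⟩

section CantorSeries

variable {d : ℕ → ℕ}

noncomputable def greedyRem (d : ℕ → ℕ) (y : ℝ) : ℕ → ℝ
  | 0 => y
  | k + 1 => d k * greedyRem d y k - greedyDigit (d k) (greedyRem d y k)

noncomputable def greedyDigits (d : ℕ → ℕ) (y : ℝ) (k : ℕ) : ℕ :=
  greedyDigit (d k) (greedyRem d y k)

lemma greedyRem_mem_Icc {y : ℝ} (hy : y ∈ Set.Icc (0 : ℝ) 1) (k : ℕ) :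
    greedyRem d y k ∈ Set.Icc (0 : ℝ) 1 := by
  induction k with
  | zero => exact hy
  | succ k ih => exact mul_sub_greedyDigit_mem_Icc (d k) ih

lemma sum_greedyDigits_div_prod (hd : ∀ k, 0 < d k) (y : ℝ) (n : ℕ) :
    ∑ k ∈ range n, (greedyDigits d y k : ℝ) / ∏ i ∈ range (k + 1), (d i : ℝ)
      = y - greedyRem d y n / ∏ i ∈ range n, (d i : ℝ) := by
  induction n with
  | zero => simp [greedyRem]
  | succ n ih =>
    have hP : 0 < ∏ i ∈ range n, (d i : ℝ) := prod_pos fun i _ => Nat.cast_pos.2 (hd i)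
    have hdn : (0 : ℝ) < d n := Nat.cast_pos.2 (hd n)
    rw [sum_range_succ, ih, prod_range_succ, greedyRem, greedyDigits]
    field_simp
    ring

lemma sum_sub_one_div_prod (hd : ∀ k, 0 < d k) (n : ℕ) :
    ∑ k ∈ range n, ((d k : ℝ) - 1) / ∏ i ∈ range (k + 1), (d i : ℝ)
      = 1 - 1 / ∏ i ∈ range n, (d i : ℝ) := by
  induction n with
  | zero => simp
  | succ n ih =>
    have hP : 0 < ∏ i ∈ range n, (d i : ℝ) := prod_pos fun i _ => Nat.cast_pos.2 (hd i)
    have hdn : (0 : ℝ) < d n := Nat.cast_pos.2 (hd n)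
    rw [sum_range_succ, ih, prod_range_succ]
    field_simp
    ring

lemma tendsto_prod_range_atTop (hd : ∀ k, 2 ≤ d k) :
    Tendsto (fun n => ∏ i ∈ range n, (d i : ℝ)) atTop atTop := by
  refine tendsto_atTop_mono (fun n => ?_) (tendsto_pow_atTop_atTop_of_one_lt one_lt_two)
  calc (2 : ℝ) ^ n = ∏ i ∈ range n, (2 : ℝ) := by rw [prod_const, card_range]
    _ ≤ ∏ i ∈ range n, (d i : ℝ) :=
      prod_le_prod (fun _ _ => zero_le_two) fun i _ => by exact_mod_cast hd i

lemma hasSum_of_sum_range_eq_sub {f g : ℕ → ℝ} {a : ℝ} (hf : ∀ k, 0 ≤ f k)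
    (hg : Tendsto g atTop (𝓝 0)) (hsum : ∀ n, ∑ k ∈ range n, f k = a - g n) : HasSum f a := by
  rw [hasSum_iff_tendsto_nat_of_nonneg hf, funext hsum]
  simpa using tendsto_const_nhds.sub hg

lemma hasSum_sub_one_div_prod (hd : ∀ k, 2 ≤ d k) :
    HasSum (fun k => ((d k : ℝ) - 1) / ∏ i ∈ range (k + 1), (d i : ℝ)) 1 := by
  have hd0 : ∀ k, 0 < d k := fun k => zero_lt_two.trans_le (hd k)
  refine hasSum_of_sum_range_eq_sub (fun k => div_nonneg ?_ (by positivity))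
    (tendsto_const_nhds.div_atTop (tendsto_prod_range_atTop hd)) (sum_sub_one_div_prod hd0)
  exact sub_nonneg.2 (by exact_mod_cast hd0 k)

lemma hasSum_greedyDigits (hd : ∀ k, 2 ≤ d k) {y : ℝ} (hy : y ∈ Set.Icc (0 : ℝ) 1) :
    HasSum (fun k => (greedyDigits d y k : ℝ) / ∏ i ∈ range (k + 1), (d i : ℝ)) y := by
  have hd0 : ∀ k, 0 < d k := fun k => zero_lt_two.trans_le (hd k)
  have hP := tendsto_prod_range_atTop hd
  have hP0 : ∀ n, 0 ≤ ∏ i ∈ range n, (d i : ℝ) := fun n => by positivity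
  have hrem : Tendsto (fun n => greedyRem d y n / ∏ i ∈ range n, (d i : ℝ)) atTop (𝓝 0) :=
    squeeze_zero
      (fun n => div_nonneg (greedyRem_mem_Icc hy n).1 (hP0 n))
      (fun n => div_le_div_of_nonneg_right (greedyRem_mem_Icc hy n).2 (hP0 n))
      (tendsto_const_nhds.div_atTop hP)
  exact hasSum_of_sum_range_eq_sub (fun k => by positivity) hrem (sum_greedyDigits_div_prod hd0 y)

end CantorSeries

lemma PNat.Icc_one_eq_map_range (n : ℕ+) :
    Icc (1 : ℕ+) n = (range n).map ⟨Nat.succPNat, Nat.succPNat_injective⟩ := by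
  ext i
  simp only [mem_Icc, Finset.mem_map, mem_range, Function.Embedding.coeFn_mk]
  constructor
  · rintro ⟨-, h⟩
    refine ⟨i.natPred, ?_, i.succPNat_natPred⟩
    have := i.pos
    rw [← PNat.coe_le_coe] at h
    rw [PNat.natPred]
    omega
  · rintro ⟨k, hk, rfl⟩
    refine ⟨one_le, ?_⟩
    rw [← PNat.coe_le_coe, Nat.succPNat_coe]
    omega

lemma dprod_succPNat (d : ℕ+ → ℕ) (k : ℕ) :
    dprod d k.succPNat = ∏ i ∈ range (k + 1), (d i.succPNat : ℝ) := by
  rw [dprod, PNat.Icc_one_eq_map_range, prod_map, Nat.succPNat_coe]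
  rfl

lemma hasSum_sub_one_div_dprod {d : ℕ+ → ℕ} (hd : ∀ n, 2 ≤ d n) :
    HasSum (fun n => ((d n : ℝ) - 1) / dprod d n) 1 := by
  rw [← Equiv.pnatEquivNat.symm.hasSum_iff]
  simpa [Function.comp_def, dprod_succPNat] using
    hasSum_sub_one_div_prod (d := fun k => d k.succPNat) fun k => hd _

lemma exists_digits_hasSum_div_dprod {d : ℕ+ → ℕ} (hd : ∀ n, 2 ≤ d n) {y : ℝ}
    (hy : y ∈ Set.Icc (0 : ℝ) 1) :
    ∃ η : ℕ+ → ℕ, (∀ n, η n < d n) ∧ HasSum (fun n => (η n : ℝ) / dprod d n) y := by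
  refine ⟨fun n => greedyDigits (fun k => d k.succPNat) y n.natPred, fun n => ?_, ?_⟩
  · show greedyDigit (d n.natPred.succPNat) _ < d n
    rw [PNat.succPNat_natPred]
    exact greedyDigit_lt (zero_lt_two.trans_le (hd n)) _
  · rw [← Equiv.pnatEquivNat.symm.hasSum_iff]
    simpa [Function.comp_def, dprod_succPNat] using
      hasSum_greedyDigits (d := fun k => d k.succPNat) (fun k => hd _) hy

noncomputable def reflectDigits (d : ℕ+ → ℕ) (B : Set ℕ+) (η : ℕ+ → ℕ) (n : ℕ+) : ℕ :=
  if n ∈ B then d n - 1 - η n else η n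

lemma reflectDigits_lt {d η : ℕ+ → ℕ} (B : Set ℕ+) (hη : ∀ n, η n < d n) (n : ℕ+) :
    reflectDigits d B η n < d n := by
  have := hη n
  unfold reflectDigits
  split_ifs <;> omega

lemma sigma_mul_reflectDigits_div {d η : ℕ+ → ℕ} (B : Set ℕ+) (hη : ∀ n, η n < d n)
    (p : ℕ+ → ℝ) (n : ℕ+) :
    sigma B n * reflectDigits d B η n / p n
      = η n / p n - if n ∈ B then ((d n : ℝ) - 1) / p n else 0 := by
  have := hη n
  by_cases hn : n ∈ B
  · simp only [sigma, reflectDigits, if_pos hn]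
    rw [Nat.cast_sub (by omega), Nat.cast_sub (by omega)]
    push_cast
    ring
  · simp [sigma, reflectDigits, hn]

theorem exists_quasiNegaD_representation (d : ℕ+ → ℕ) (hd : ∀ n, 2 ≤ d n) (B : Set ℕ+)
    (x : ℝ)
    (hx : x ∈ Set.Icc
      (-∑' n : ℕ+, (if n ∈ B then ((d n : ℝ) - 1) / dprod d n else 0))
      (∑' n : ℕ+, (if n ∉ B then ((d n : ℝ) - 1) / dprod d n else 0))) :
    ∃ ε : ℕ+ → ℕ, (∀ n, ε n < d n) ∧ x = qndVal d B ε := by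
  have hg := hasSum_sub_one_div_dprod hd
  have hB := (hg.summable.indicator B).hasSum
  have hsplit := (hB.add (hg.summable.indicator Bᶜ).hasSum).unique
    (by simpa only [Set.indicator_self_add_compl_apply] using hg)
  simp only [Set.indicator_apply, Set.mem_compl_iff] at hsplit
  obtain ⟨η, hη, hsum⟩ := exists_digits_hasSum_div_dprod hd
    (y := x + ∑' n : ℕ+, (if n ∈ B then ((d n : ℝ) - 1) / dprod d n else 0))
    ⟨by linarith [hx.1], by linarith [hx.2]⟩
  refine ⟨reflectDigits d B η, reflectDigits_lt B hη, ?_⟩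
  rw [qndVal, funext (sigma_mul_reflectDigits_div B hη (dprod d))]
  exact ((hsum.sub hB).tsum_eq.trans (add_sub_cancel_right _ _)).symm
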